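/- arXiv:1903.06644 — 3 statements merged into one kernel-verified Lean document; each statement's English description precedes it below -/
import Mathlib

section
/- Let Ω₀,…,Ω_k ⊂ ℝⁿ be open bounded sets, t₀,…,t_k ∈ (0,1] with Σ t_i = 1, and let v_i:Ω_i→ℝ be continuous functions bounded from below satisfying v_i(x) → +∞ as x → ∂Ω_i for every i. Then the weighted infimal convolution w of v₀,…,v_k is continuous on Ω_λ, is exact at every point of Ω_λ, and satisfies w(x) → +∞ as x → ∂Ω_λ (i.e., for every sequence x^m ∈ Ω_λ with dist(x^m, ∂Ω_λ) → 0 one has w(x^m) → +∞). -/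
open Metric Filter Topology Set

noncomputable section

/-- The Hessian matrix of a real-valued function on `ℝⁿ` at a point. -/
def hessMat (n : ℕ) (φ : EuclideanSpace ℝ (Fin n) → ℝ) (x : EuclideanSpace ℝ (Fin n)) :
    Matrix (Fin n) (Fin n) ℝ :=
  Matrix.of fun i j =>
    iteratedFDeriv ℝ 2 φ x ![EuclideanSpace.single i 1, EuclideanSpace.single j 1]

/-- The quadratic form `⟨A v, v⟩` associated with a matrix. -/
def quadForm (n : ℕ) (A : Matrix (Fin n) (Fin n) ℝ) (v : EuclideanSpace ℝ (Fin n)) : ℝ :=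
  ∑ i, ∑ j, A i j * v i * v j

/-- The ordering of symmetric matrices: `A ≤ B` iff `B - A` is positive semidefinite. -/
def MatLE (n : ℕ) (A B : Matrix (Fin n) (Fin n) ℝ) : Prop := (B - A).PosSemidef

/-- `(ξ, A)` belongs to the second-order sub-jet `J^{2,-} u (x)` (relative to `Ω`):
`u y ≥ u x + ⟨ξ, y-x⟩ + ½⟨A(y-x), y-x⟩ + o(|y-x|²)` as `y → x` in `Ω`. -/
def InSubjet (n : ℕ) (Ω : Set (EuclideanSpace ℝ (Fin n))) (u : EuclideanSpace ℝ (Fin n) → ℝ)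
    (x ξ : EuclideanSpace ℝ (Fin n)) (A : Matrix (Fin n) (Fin n) ℝ) : Prop :=
  A.IsSymm ∧ ∀ ε > (0:ℝ), ∀ᶠ y in nhdsWithin x Ω,
    u x + (∑ i, ξ i * (y - x) i) + (1/2) * quadForm n A (y - x) - ε * ‖y - x‖^2 ≤ u y

/-- `(ξ, A)` belongs to the closure `J̄^{2,-} u (x)` of the second-order sub-jet. -/
def InClosureSubjet (n : ℕ) (Ω : Set (EuclideanSpace ℝ (Fin n)))
    (u : EuclideanSpace ℝ (Fin n) → ℝ) (x ξ : EuclideanSpace ℝ (Fin n))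
    (A : Matrix (Fin n) (Fin n) ℝ) : Prop :=
  ∃ (xm ξm : ℕ → EuclideanSpace ℝ (Fin n)) (Am : ℕ → Matrix (Fin n) (Fin n) ℝ),
    (∀ m, xm m ∈ Ω ∧ InSubjet n Ω u (xm m) (ξm m) (Am m)) ∧
    Tendsto xm atTop (nhds x) ∧ Tendsto (fun m => u (xm m)) atTop (nhds (u x)) ∧
    Tendsto ξm atTop (nhds ξ) ∧ Tendsto Am atTop (nhds A)

/-- Viscosity super-solution in the sense of Birindelli–Demengel of
`F(∇u, D²u) = g(x, u(x))` in `Ω`. -/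
def BDSuper (n : ℕ) (F : EuclideanSpace ℝ (Fin n) → Matrix (Fin n) (Fin n) ℝ → ℝ)
    (g : EuclideanSpace ℝ (Fin n) → ℝ → ℝ) (Ω : Set (EuclideanSpace ℝ (Fin n)))
    (u : EuclideanSpace ℝ (Fin n) → ℝ) : Prop :=
  ∀ x ∈ Ω,
    (∃ c : ℝ, ∃ r > (0:ℝ), ball x r ⊆ Ω ∧ (∀ y ∈ ball x r, u y = c) ∧
      ∀ y ∈ ball x r, 0 ≥ g y c) ∨
    (∀ φ : EuclideanSpace ℝ (Fin n) → ℝ, ContDiff ℝ 2 φ → φ x = u x →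
      (∀ y ∈ Ω, φ y ≤ u y) → gradient φ x ≠ 0 →
      F (gradient φ x) (hessMat n φ x) ≥ g x (u x))

/-- Viscosity sub-solution in the sense of Birindelli–Demengel of
`F(∇u, D²u) = g(x, u(x))` in `Ω`. -/
def BDSub (n : ℕ) (F : EuclideanSpace ℝ (Fin n) → Matrix (Fin n) (Fin n) ℝ → ℝ)
    (g : EuclideanSpace ℝ (Fin n) → ℝ → ℝ) (Ω : Set (EuclideanSpace ℝ (Fin n)))
    (u : EuclideanSpace ℝ (Fin n) → ℝ) : Prop :=
  ∀ x ∈ Ω,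
    (∃ c : ℝ, ∃ r > (0:ℝ), ball x r ⊆ Ω ∧ (∀ y ∈ ball x r, u y = c) ∧
      ∀ y ∈ ball x r, 0 ≤ g y c) ∨
    (∀ φ : EuclideanSpace ℝ (Fin n) → ℝ, ContDiff ℝ 2 φ → φ x = u x →
      (∀ y ∈ Ω, u y ≤ φ y) → gradient φ x ≠ 0 →
      F (gradient φ x) (hessMat n φ x) ≤ g x (u x))

/-- The set of `λ` admitting a positive l.s.c. viscosity super-solution (BD sense) of
`F(∇u, D²u) = λ u^{α+1}` in `Ω`. -/
def eigenSet (n : ℕ) (F : EuclideanSpace ℝ (Fin n) → Matrix (Fin n) (Fin n) ℝ → ℝ)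
    (α : ℝ) (Ω : Set (EuclideanSpace ℝ (Fin n))) : Set ℝ :=
  {lam | ∃ u : EuclideanSpace ℝ (Fin n) → ℝ, LowerSemicontinuousOn u Ω ∧
    (∀ x ∈ Ω, 0 < u x) ∧ BDSuper n F (fun _ s => lam * s ^ (α + 1)) Ω u}

/-- The principal eigenvalue `λ̄(Ω)`. -/
def princEig (n : ℕ) (F : EuclideanSpace ℝ (Fin n) → Matrix (Fin n) (Fin n) ℝ → ℝ)
    (α : ℝ) (Ω : Set (EuclideanSpace ℝ (Fin n))) : ℝ :=
  sSup (eigenSet n F α Ω)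

/-- (H1) Homogeneity. -/
def H1 (n : ℕ) (F : EuclideanSpace ℝ (Fin n) → Matrix (Fin n) (Fin n) ℝ → ℝ) (α : ℝ) : Prop :=
  ∀ t : ℝ, t ≠ 0 → ∀ μ : ℝ, ∀ ξ : EuclideanSpace ℝ (Fin n), ξ ≠ 0 →
    ∀ X : Matrix (Fin n) (Fin n) ℝ, X.IsSymm →
      F (t • ξ) (μ • X) = |t| ^ α * μ * F ξ X

/-- (H2) Uniform ellipticity with constants `c ≤ C`. -/
def H2 (n : ℕ) (F : EuclideanSpace ℝ (Fin n) → Matrix (Fin n) (Fin n) ℝ → ℝ)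
    (α c C : ℝ) : Prop :=
  ∀ ξ : EuclideanSpace ℝ (Fin n), ξ ≠ 0 → ∀ X Y : Matrix (Fin n) (Fin n) ℝ, X.IsSymm →
    Y.PosSemidef →
      c * ‖ξ‖ ^ α * Y.trace ≤ F ξ X - F ξ (X + Y) ∧
      F ξ X - F ξ (X + Y) ≤ C * ‖ξ‖ ^ α * Y.trace

/-- (H2)' Degenerate ellipticity. -/
def H2' (n : ℕ) (F : EuclideanSpace ℝ (Fin n) → Matrix (Fin n) (Fin n) ℝ → ℝ) : Prop :=
  ∀ ξ : EuclideanSpace ℝ (Fin n), ξ ≠ 0 → ∀ X Y : Matrix (Fin n) (Fin n) ℝ, X.IsSymm →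
    Y.IsSymm → (Y - X).PosSemidef → F ξ Y ≤ F ξ X

/-- (H3) Convexity in the matrix variable. -/
def H3 (n : ℕ) (F : EuclideanSpace ℝ (Fin n) → Matrix (Fin n) (Fin n) ℝ → ℝ) : Prop :=
  ∀ ξ : EuclideanSpace ℝ (Fin n), ξ ≠ 0 →
    ConvexOn ℝ {X : Matrix (Fin n) (Fin n) ℝ | X.IsSymm} (F ξ)

/-- Continuity of `F` on `(ℝⁿ ∖ {0}) × Sⁿ`. -/
def FCont (n : ℕ) (F : EuclideanSpace ℝ (Fin n) → Matrix (Fin n) (Fin n) ℝ → ℝ) : Prop :=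
  ContinuousOn (fun p : EuclideanSpace ℝ (Fin n) × Matrix (Fin n) (Fin n) ℝ => F p.1 p.2)
    {p | p.1 ≠ 0}

/-- Uniform exterior sphere condition. -/
def UnifExtSphere (n : ℕ) (Ω : Set (EuclideanSpace ℝ (Fin n))) : Prop :=
  ∃ r > (0:ℝ), ∀ y ∈ frontier Ω, ∃ z : EuclideanSpace ℝ (Fin n),
    dist z y = r ∧ ball z r ∩ Ω = ∅

/-- Lipschitz boundary: near every boundary point, after a rigid motion, `Ω` coincides with
the open region above the graph of a Lipschitz function. -/
def LipschitzBoundary (n : ℕ) (Ω : Set (EuclideanSpace ℝ (Fin n))) : Prop :=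
  ∀ y ∈ frontier Ω, ∃ U : Set (EuclideanSpace ℝ (Fin n)), IsOpen U ∧ y ∈ U ∧
    ∃ (ν : EuclideanSpace ℝ (Fin n)) (f : EuclideanSpace ℝ (Fin n) → ℝ) (K : NNReal),
      ‖ν‖ = 1 ∧ LipschitzWith K f ∧
      Ω ∩ U = {x | f (x - (inner ℝ x ν : ℝ) • ν) < (inner ℝ x ν : ℝ)} ∩ U

/-- The class `𝒜ⁿ`. -/
def ClassA (n : ℕ) (Ω : Set (EuclideanSpace ℝ (Fin n))) : Prop :=
  IsOpen Ω ∧ Bornology.IsBounded Ω ∧ IsConnected Ω ∧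
    LipschitzBoundary n Ω ∧ UnifExtSphere n Ω

/-- Minkowski convex combination `(1-t) Ω₀ + t Ω₁`. -/
def minkCombo (n : ℕ) (t : ℝ) (Ω₀ Ω₁ : Set (EuclideanSpace ℝ (Fin n))) :
    Set (EuclideanSpace ℝ (Fin n)) :=
  {z | ∃ x ∈ Ω₀, ∃ y ∈ Ω₁, z = (1 - t) • x + t • y}

/-- Distance from the boundary. -/
def distBdry (n : ℕ) (Ω : Set (EuclideanSpace ℝ (Fin n))) (x : EuclideanSpace ℝ (Fin n)) : ℝ :=
  Metric.infDist x (frontier Ω)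

/-- `d_Ω` is semiconcave on `cl(Ω)` with constant `κ`. -/
def SemiconcaveDist (n : ℕ) (Ω : Set (EuclideanSpace ℝ (Fin n))) (κ : ℝ) : Prop :=
  ConcaveOn ℝ (closure Ω) (fun x => distBdry n Ω x - κ / 2 * ‖x‖ ^ 2)

/-- A positive viscosity eigenfunction on `Ω`. -/
def IsPosEigenfunction (n : ℕ) (F : EuclideanSpace ℝ (Fin n) → Matrix (Fin n) (Fin n) ℝ → ℝ)
    (α : ℝ) (Ω : Set (EuclideanSpace ℝ (Fin n))) (u : EuclideanSpace ℝ (Fin n) → ℝ) : Prop :=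
  ContinuousOn u (closure Ω) ∧ (∀ x ∈ Ω, 0 < u x) ∧ (∀ x ∈ frontier Ω, u x = 0) ∧
  BDSub n F (fun _ s => princEig n F α Ω * (|s| ^ α * s)) Ω u ∧
  BDSuper n F (fun _ s => princEig n F α Ω * (|s| ^ α * s)) Ω u

/-- The transformed operator `G(ξ, X) = -F(ξ, ξ⊗ξ - X)`. -/
def Gop (n : ℕ) (F : EuclideanSpace ℝ (Fin n) → Matrix (Fin n) (Fin n) ℝ → ℝ)
    (ξ : EuclideanSpace ℝ (Fin n)) (X : Matrix (Fin n) (Fin n) ℝ) : ℝ :=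
  - F ξ (Matrix.vecMulVec (fun i => ξ i) (fun i => ξ i) - X)

/-- Minkowski combination `t₀Ω₀ + ⋯ + t_kΩ_k` of a family. -/
def minkComboFam (n k : ℕ) (t : Fin (k+1) → ℝ) (Ω : Fin (k+1) → Set (EuclideanSpace ℝ (Fin n))) :
    Set (EuclideanSpace ℝ (Fin n)) :=
  {x | ∃ p : Fin (k+1) → EuclideanSpace ℝ (Fin n), (∀ i, p i ∈ Ω i) ∧ x = ∑ i, t i • p i}

/-- The weighted infimal convolution of `v₀, …, v_k`. -/
def infConvFam (n k : ℕ) (t : Fin (k+1) → ℝ) (v : Fin (k+1) → EuclideanSpace ℝ (Fin n) → ℝ)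
    (Ω : Fin (k+1) → Set (EuclideanSpace ℝ (Fin n))) (x : EuclideanSpace ℝ (Fin n)) : ℝ :=
  sInf ((fun p : Fin (k+1) → EuclideanSpace ℝ (Fin n) => ∑ i, t i * v i (p i)) ''
    {p | (∀ i, p i ∈ Ω i) ∧ x = ∑ i, t i • p i})

/-- The weighted infimal convolution is exact at `x`. -/
def InfConvExactAt (n k : ℕ) (t : Fin (k+1) → ℝ) (v : Fin (k+1) → EuclideanSpace ℝ (Fin n) → ℝ)
    (Ω : Fin (k+1) → Set (EuclideanSpace ℝ (Fin n))) (x : EuclideanSpace ℝ (Fin n)) : Prop :=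
  ∃ p : Fin (k+1) → EuclideanSpace ℝ (Fin n), (∀ i, p i ∈ Ω i) ∧ x = ∑ i, t i • p i ∧
    infConvFam n k t v Ω x = ∑ i, t i * v i (p i)


/-!
Since the `v_i` are bounded below and blow up at `∂Ω_i`, a bound on the cost
`∑ t_i v_i(p_i)` keeps every `p_i` in a compact sublevel set of `v_i` inside `Ω_i`. Hence the
admissible decompositions of cost `≤ B` form a compact set `S_B`, on which the continuous cost
attains its infimum: `w` is exact. The sublevel set `{w ≤ B}` is then the image of `S_B` under
`p ↦ ∑ t_i p_i`, a compact subset of the open set `Ω_λ`; so it is closed (lower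
semicontinuity of `w`) and stays a positive distance away from `∂Ω_λ` (blow-up of `w`).
Upper semicontinuity comes from moving the `0`-th component alone: `p₀ ↦ p₀ + t₀⁻¹ (y - x)`
turns a decomposition of `x` into one of `y`.
-/

section Blowup

variable {α : Type*} [MetricSpace α]

def BlowsUpAtFrontier (s : Set α) (f : α → ℝ) : Prop :=
  ∀ M : ℝ, ∃ δ > (0:ℝ), ∀ x ∈ s, infDist x (frontier s) < δ → M < f x

variable {s : Set α} {f : α → ℝ}

theorem BlowsUpAtFrontier.ne_univ [Nonempty α] (hf : BlowsUpAtFrontier s f) : s ≠ univ := by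
  rintro rfl
  obtain ⟨x⟩ := ‹Nonempty α›
  obtain ⟨δ, hδ, hM⟩ := hf (f x)
  exact lt_irrefl _ (hM x (mem_univ x) (by rwa [frontier_univ, infDist_empty]))

theorem BlowsUpAtFrontier.isCompact_sublevel [ProperSpace α] (hf : BlowsUpAtFrontier s f)
    (hs : Bornology.IsBounded s) (hfc : ContinuousOn f s) (M : ℝ) :
    IsCompact {x ∈ s | f x ≤ M} := by
  obtain ⟨δ, hδ, hM⟩ := hf M
  have hfar : {x ∈ s | f x ≤ M} ⊆ {x | δ ≤ infDist x (frontier s)} :=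
    fun x hx => not_lt.1 fun h => (hM x hx.1 h).not_ge hx.2
  refine isCompact_of_isClosed_isBounded (closure_subset_iff_isClosed.1 fun y hy => ?_)
    (hs.subset (sep_subset _ _))
  have hyfar : δ ≤ infDist y (frontier s) :=
    closure_minimal hfar (isClosed_le continuous_const (continuous_infDist_pt _)) hy
  have hys : y ∈ s := by
    by_contra hns
    have hfr : y ∈ frontier s :=
      ⟨closure_mono (sep_subset _ _) hy, fun h => hns (interior_subset h)⟩
    exact (infDist_zero_of_mem hfr ▸ hyfar).not_gt hδ
  exact ⟨hys, ContinuousWithinAt.closure_le hy ((hfc y hys).mono (sep_subset _ _))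
    continuousWithinAt_const fun x hx => hx.2⟩

end Blowup

theorem IsCompact.sep_le_of_continuousOn {X : Type*} [TopologicalSpace X] [T2Space X]
    {K : Set X} {g : X → ℝ} (hK : IsCompact K) (hg : ContinuousOn g K) (B : ℝ) :
    IsCompact {x ∈ K | g x ≤ B} :=
  hK.of_isClosed_subset (hg.preimage_isClosed_of_isClosed hK.isClosed isClosed_Iic)
    fun _ hx => hx.1

theorem IsCompact.exists_pos_le_infDist_frontier {X : Type*} [MetricSpace X] {K U : Set X}
    (hK : IsCompact K) (hU : IsOpen U) (hKU : K ⊆ U) (hfr : (frontier U).Nonempty) :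
    ∃ δ > 0, ∀ x ∈ K, δ ≤ infDist x (frontier U) := by
  obtain ⟨δ, hδ, hthick⟩ := hK.exists_cthickening_subset_open hU hKU
  refine ⟨δ, hδ, fun x hx => (le_infDist hfr).2 fun y hy => ?_⟩
  by_contra! hlt
  have hyU : y ∈ U := hthick (closedBall_subset_cthickening hx δ (by
    rw [mem_closedBall, dist_comm]; exact hlt.le))
  exact hy.2 (hU.interior_eq.symm ▸ hyU)

theorem le_sub_sum_add_of_sum_le {ι : Type*} [Fintype ι] {f g : ι → ℝ} {B : ℝ}
    (hgf : ∀ j, g j ≤ f j) (hf : ∑ j, f j ≤ B) (i : ι) : f i ≤ B - ∑ j, g j + g i := by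
  have : f i - g i ≤ ∑ j, (f j - g j) :=
    Finset.single_le_sum (f := fun j => f j - g j) (fun j _ => sub_nonneg.2 (hgf j))
      (Finset.mem_univ i)
  rw [Finset.sum_sub_distrib] at this
  linarith

section InfimalConvolution

variable {n k : ℕ} {Ω : Fin (k+1) → Set (EuclideanSpace ℝ (Fin n))} {t : Fin (k+1) → ℝ}
  {v : Fin (k+1) → EuclideanSpace ℝ (Fin n) → ℝ}

def weightedCost (t : Fin (k+1) → ℝ) (v : Fin (k+1) → EuclideanSpace ℝ (Fin n) → ℝ)
    (p : Fin (k+1) → EuclideanSpace ℝ (Fin n)) : ℝ :=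
  ∑ i, t i * v i (p i)

theorem continuousOn_weightedCost (hv : ∀ i, ContinuousOn (v i) (Ω i)) :
    ContinuousOn (weightedCost t v) (univ.pi Ω) :=
  continuousOn_finsetSum _ fun i _ => continuousOn_const.mul
    ((hv i).comp (continuous_apply i).continuousOn fun _ hp => hp i (mem_univ i))

theorem continuous_sum_smul (t : Fin (k+1) → ℝ) :
    Continuous fun p : Fin (k+1) → EuclideanSpace ℝ (Fin n) => ∑ i, t i • p i := by
  fun_prop

theorem infConvFam_le_weightedCost (ht : ∀ i, 0 < t i)
    (hvb : ∀ i, ∃ m : ℝ, ∀ x ∈ Ω i, m ≤ v i x) {x : EuclideanSpace ℝ (Fin n)}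
    {p : Fin (k+1) → EuclideanSpace ℝ (Fin n)} (hp : ∀ i, p i ∈ Ω i)
    (hx : x = ∑ i, t i • p i) :
    infConvFam n k t v Ω x ≤ weightedCost t v p := by
  choose c hc using hvb
  refine csInf_le ⟨∑ i, t i * c i, ?_⟩ ⟨p, ⟨hp, hx⟩, rfl⟩
  rintro _ ⟨q, ⟨hq, -⟩, rfl⟩
  exact Finset.sum_le_sum fun i _ => mul_le_mul_of_nonneg_left (hc i _ (hq i)) (ht i).le

theorem isCompact_weightedCost_sublevel (hΩb : ∀ i, Bornology.IsBounded (Ω i))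
    (ht : ∀ i, 0 < t i) (hv : ∀ i, ContinuousOn (v i) (Ω i))
    (hvb : ∀ i, ∃ m : ℝ, ∀ x ∈ Ω i, m ≤ v i x)
    (hdiv : ∀ i, BlowsUpAtFrontier (Ω i) (v i))
    (B : ℝ) : IsCompact {p ∈ univ.pi Ω | weightedCost t v p ≤ B} := by
  choose c hc using hvb
  -- the lower bounds `c j` of the other summands turn the bound on the cost into one on `v i`
  set M : Fin (k+1) → ℝ := fun i => (B - ∑ j, t j * c j + t i * c i) / t i
  set K : Fin (k+1) → Set (EuclideanSpace ℝ (Fin n)) := fun i => {x ∈ Ω i | v i x ≤ M i}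
  have hbound : ∀ p ∈ univ.pi Ω, weightedCost t v p ≤ B → p ∈ univ.pi K := by
    intro p hp hB i _
    refine ⟨hp i (mem_univ i), (le_div_iff₀ (ht i)).2 ?_⟩
    rw [mul_comm]
    exact le_sub_sum_add_of_sum_le
      (fun j => mul_le_mul_of_nonneg_left (hc j _ (hp j (mem_univ j))) (ht j).le) hB i
  have hK : IsCompact (univ.pi K) :=
    isCompact_univ_pi fun i => (hdiv i).isCompact_sublevel (hΩb i) (hv i) (M i)
  have hKΩ : univ.pi K ⊆ univ.pi Ω := pi_mono fun i _ => sep_subset _ _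
  convert hK.sep_le_of_continuousOn ((continuousOn_weightedCost hv).mono hKΩ) B using 1
  ext p
  exact ⟨fun h => ⟨hbound p h.1 h.2, h.2⟩, fun h => ⟨hKΩ h.1, h.2⟩⟩

theorem infConvExactAt_of_mem_minkComboFam (hΩb : ∀ i, Bornology.IsBounded (Ω i))
    (ht : ∀ i, 0 < t i) (hv : ∀ i, ContinuousOn (v i) (Ω i))
    (hvb : ∀ i, ∃ m : ℝ, ∀ x ∈ Ω i, m ≤ v i x)
    (hdiv : ∀ i, BlowsUpAtFrontier (Ω i) (v i))
    {x : EuclideanSpace ℝ (Fin n)} (hx : x ∈ minkComboFam n k t Ω) :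
    InfConvExactAt n k t v Ω x := by
  obtain ⟨p₀, hp₀, hx₀⟩ := hx
  set T := {p ∈ univ.pi Ω | weightedCost t v p ≤ weightedCost t v p₀} ∩
    {p | x = ∑ i, t i • p i}
  have hT : IsCompact T := (isCompact_weightedCost_sublevel hΩb ht hv hvb hdiv _).inter_right
    (isClosed_eq continuous_const (continuous_sum_smul t))
  have hp₀T : p₀ ∈ T := ⟨⟨fun i _ => hp₀ i, le_rfl⟩, hx₀⟩
  obtain ⟨p, ⟨⟨hpΩ, -⟩, hpx⟩, hmin⟩ :=
    hT.exists_isMinOn ⟨p₀, hp₀T⟩ ((continuousOn_weightedCost hv).mono fun q hq => hq.1.1)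
  have hlow : ∀ q, (∀ i, q i ∈ Ω i) → x = ∑ i, t i • q i →
      weightedCost t v p ≤ weightedCost t v q := by
    intro q hq hqx
    by_cases hle : weightedCost t v q ≤ weightedCost t v p₀
    · exact hmin ⟨⟨fun i _ => hq i, hle⟩, hqx⟩
    · exact (hmin hp₀T).trans (not_le.1 hle).le
  refine ⟨p, fun i => hpΩ i (mem_univ i), hpx, le_antisymm
    (infConvFam_le_weightedCost ht hvb (fun i => hpΩ i (mem_univ i)) hpx) ?_⟩
  refine le_csInf ⟨_, p₀, ⟨hp₀, hx₀⟩, rfl⟩ ?_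
  rintro _ ⟨q, ⟨hq, hqx⟩, rfl⟩
  exact hlow q hq hqx

theorem mem_image_weightedCost_sublevel (hΩb : ∀ i, Bornology.IsBounded (Ω i))
    (ht : ∀ i, 0 < t i) (hv : ∀ i, ContinuousOn (v i) (Ω i))
    (hvb : ∀ i, ∃ m : ℝ, ∀ x ∈ Ω i, m ≤ v i x)
    (hdiv : ∀ i, BlowsUpAtFrontier (Ω i) (v i))
    {x : EuclideanSpace ℝ (Fin n)} (hx : x ∈ minkComboFam n k t Ω) {B : ℝ}
    (hB : infConvFam n k t v Ω x ≤ B) :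
    x ∈ (fun p => ∑ i, t i • p i) '' {p ∈ univ.pi Ω | weightedCost t v p ≤ B} := by
  obtain ⟨p, hp, hpx, hw⟩ := infConvExactAt_of_mem_minkComboFam hΩb ht hv hvb hdiv hx
  exact ⟨p, ⟨fun i _ => hp i, hw.symm.trans_le hB⟩, hpx.symm⟩

theorem sum_smul_update_zero_eq (ht0 : t 0 ≠ 0) {p : Fin (k+1) → EuclideanSpace ℝ (Fin n)}
    {x : EuclideanSpace ℝ (Fin n)} (hx : x = ∑ i, t i • p i)
    (y : EuclideanSpace ℝ (Fin n)) :
    ∑ i, t i • Function.update p 0 (p 0 + (t 0)⁻¹ • (y - x)) i = y := by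
  simp only [Fin.sum_univ_succ, Function.update_self, ne_eq, Fin.succ_ne_zero,
    not_false_eq_true, Function.update_of_ne] at hx ⊢
  rw [smul_add, smul_inv_smul₀ ht0, hx]
  abel

theorem tendsto_update_zero (t : Fin (k+1) → ℝ) (p : Fin (k+1) → EuclideanSpace ℝ (Fin n))
    (x : EuclideanSpace ℝ (Fin n)) :
    Tendsto (fun y => Function.update p 0 (p 0 + (t 0)⁻¹ • (y - x))) (𝓝 x) (𝓝 p) := by
  have hcont : Continuous fun y => Function.update p 0 (p 0 + (t 0)⁻¹ • (y - x)) := by fun_prop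
  simpa using hcont.tendsto x

theorem isOpen_minkComboFam (hΩo : ∀ i, IsOpen (Ω i)) (ht0 : t 0 ≠ 0) :
    IsOpen (minkComboFam n k t Ω) := by
  refine isOpen_iff_mem_nhds.2 ?_
  rintro x ⟨p, hp, hx⟩
  filter_upwards [(tendsto_update_zero t p x).eventually
    ((isOpen_set_pi finite_univ fun i _ => hΩo i).mem_nhds fun i _ => hp i)] with y hy
  exact ⟨_, fun i => hy i (mem_univ i), (sum_smul_update_zero_eq ht0 hx y).symm⟩

theorem upperSemicontinuousAt_infConvFam (hΩo : ∀ i, IsOpen (Ω i))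
    (hΩb : ∀ i, Bornology.IsBounded (Ω i)) (ht : ∀ i, 0 < t i)
    (hv : ∀ i, ContinuousOn (v i) (Ω i)) (hvb : ∀ i, ∃ m : ℝ, ∀ x ∈ Ω i, m ≤ v i x)
    (hdiv : ∀ i, BlowsUpAtFrontier (Ω i) (v i))
    {x : EuclideanSpace ℝ (Fin n)} (hx : x ∈ minkComboFam n k t Ω) :
    UpperSemicontinuousAt (infConvFam n k t v Ω) x := by
  intro b hb
  obtain ⟨p, hp, hpx, hw⟩ := infConvExactAt_of_mem_minkComboFam hΩb ht hv hvb hdiv hx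
  have hpi : univ.pi Ω ∈ 𝓝 p :=
    (isOpen_set_pi finite_univ fun i _ => hΩo i).mem_nhds fun i _ => hp i
  have hcost : Tendsto
      (fun y => weightedCost t v (Function.update p 0 (p 0 + (t 0)⁻¹ • (y - x))))
      (𝓝 x) (𝓝 (weightedCost t v p)) :=
    ((continuousOn_weightedCost hv).continuousAt hpi).tendsto.comp (tendsto_update_zero t p x)
  filter_upwards [(tendsto_update_zero t p x).eventually hpi,
    hcost.eventually_lt_const (hw ▸ hb)] with y hy hyb
  exact (infConvFam_le_weightedCost ht hvb (fun i => hy i (mem_univ i))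
    (sum_smul_update_zero_eq (ht 0).ne' hpx y).symm).trans_lt hyb

theorem lowerSemicontinuousWithinAt_infConvFam (hΩb : ∀ i, Bornology.IsBounded (Ω i))
    (ht : ∀ i, 0 < t i) (hv : ∀ i, ContinuousOn (v i) (Ω i))
    (hvb : ∀ i, ∃ m : ℝ, ∀ x ∈ Ω i, m ≤ v i x)
    (hdiv : ∀ i, BlowsUpAtFrontier (Ω i) (v i))
    (x : EuclideanSpace ℝ (Fin n)) :
    LowerSemicontinuousWithinAt (infConvFam n k t v Ω) (minkComboFam n k t Ω) x := by
  intro a ha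
  set L := (fun p => ∑ i, t i • p i) '' {p ∈ univ.pi Ω | weightedCost t v p ≤ a}
  have hL : IsClosed L :=
    ((isCompact_weightedCost_sublevel hΩb ht hv hvb hdiv a).image (continuous_sum_smul t)).isClosed
  have hxL : x ∉ L := by
    rintro ⟨p, ⟨hp, hpa⟩, rfl⟩
    exact ((infConvFam_le_weightedCost ht hvb (fun i => hp i (mem_univ i)) rfl).trans
      hpa).not_gt ha
  filter_upwards [mem_nhdsWithin_of_mem_nhds (hL.isOpen_compl.mem_nhds hxL),
    self_mem_nhdsWithin] with y hyL hy
  exact lt_of_not_ge fun hle => hyL (mem_image_weightedCost_sublevel hΩb ht hv hvb hdiv hy hle)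

theorem minkComboFam_ne_univ (hΩb : ∀ i, Bornology.IsBounded (Ω i))
    (hdiv : ∀ i, BlowsUpAtFrontier (Ω i) (v i)) : minkComboFam n k t Ω ≠ univ := by
  intro h
  obtain ⟨p, hp, -⟩ : (0 : EuclideanSpace ℝ (Fin n)) ∈ minkComboFam n k t Ω :=
    h ▸ mem_univ _
  obtain ⟨y, hy⟩ := (ne_univ_iff_exists_notMem _).1 (hdiv 0).ne_univ
  have : Nontrivial (EuclideanSpace ℝ (Fin n)) := ⟨p 0, y, ne_of_mem_of_not_mem (hp 0) hy⟩
  have hbdd : Bornology.IsBounded (minkComboFam n k t Ω) :=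
    ((isCompact_univ_pi fun i => (hΩb i).isCompact_closure).image
      (continuous_sum_smul t)).isBounded.subset
        fun x ⟨p, hp, hx⟩ => ⟨p, fun i _ => subset_closure (hp i), hx.symm⟩
  exact NormedSpace.unbounded_univ ℝ _ (h ▸ hbdd)

theorem tendsto_infConvFam_atTop (hΩo : ∀ i, IsOpen (Ω i))
    (hΩb : ∀ i, Bornology.IsBounded (Ω i)) (ht : ∀ i, 0 < t i)
    (hv : ∀ i, ContinuousOn (v i) (Ω i)) (hvb : ∀ i, ∃ m : ℝ, ∀ x ∈ Ω i, m ≤ v i x)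
    (hdiv : ∀ i, BlowsUpAtFrontier (Ω i) (v i))
    {xs : ℕ → EuclideanSpace ℝ (Fin n)} (hxs : ∀ m, xs m ∈ minkComboFam n k t Ω)
    (hdist : Tendsto (fun m => infDist (xs m) (frontier (minkComboFam n k t Ω))) atTop (𝓝 0)) :
    Tendsto (fun m => infConvFam n k t v Ω (xs m)) atTop atTop := by
  have hfr : (frontier (minkComboFam n k t Ω)).Nonempty :=
    nonempty_frontier_iff.2 ⟨⟨xs 0, hxs 0⟩, minkComboFam_ne_univ hΩb hdiv⟩
  refine tendsto_atTop.2 fun B => ?_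
  obtain ⟨δ, hδ, hfar⟩ :=
    ((isCompact_weightedCost_sublevel hΩb ht hv hvb hdiv B).image
      (continuous_sum_smul t)).exists_pos_le_infDist_frontier
      (isOpen_minkComboFam hΩo (ht 0).ne')
      (fun _ ⟨p, ⟨hp, _⟩, hx⟩ => ⟨p, fun i => hp i (mem_univ i), hx.symm⟩) hfr
  filter_upwards [hdist.eventually (gt_mem_nhds hδ)] with m hm
  by_contra! hlt
  exact (hfar _ (mem_image_weightedCost_sublevel hΩb ht hv hvb hdiv (hxs m) hlt.le)).not_gt hm

end InfimalConvolution

theorem infimal_convolution_exact_and_divergent_general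
    (n k : ℕ) (Ω : Fin (k+1) → Set (EuclideanSpace ℝ (Fin n)))
    (hΩ : ∀ i, IsOpen (Ω i) ∧ Bornology.IsBounded (Ω i))
    (t : Fin (k+1) → ℝ) (ht : ∀ i, t i ∈ Set.Ioc (0:ℝ) 1)
    (v : Fin (k+1) → EuclideanSpace ℝ (Fin n) → ℝ)
    (hv : ∀ i, ContinuousOn (v i) (Ω i))
    (hvb : ∀ i, ∃ m : ℝ, ∀ x ∈ Ω i, m ≤ v i x)
    (hdiv : ∀ i, ∀ M : ℝ, ∃ δ > (0:ℝ), ∀ x ∈ Ω i,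
      Metric.infDist x (frontier (Ω i)) < δ → M < v i x) :
    ContinuousOn (infConvFam n k t v Ω) (minkComboFam n k t Ω) ∧
    (∀ x ∈ minkComboFam n k t Ω, InfConvExactAt n k t v Ω x) ∧
    ∀ xs : ℕ → EuclideanSpace ℝ (Fin n), (∀ m, xs m ∈ minkComboFam n k t Ω) →
      Tendsto (fun m => Metric.infDist (xs m) (frontier (minkComboFam n k t Ω))) atTop (nhds 0) →
      Tendsto (fun m => infConvFam n k t v Ω (xs m)) atTop atTop := by
  have hΩo : ∀ i, IsOpen (Ω i) := fun i => (hΩ i).1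
  have hΩb : ∀ i, Bornology.IsBounded (Ω i) := fun i => (hΩ i).2
  have htpos : ∀ i, 0 < t i := fun i => (ht i).1
  refine ⟨fun x hx => ?_, fun x hx => ?_, fun xs hxs hdist => ?_⟩
  · exact continuousWithinAt_iff_lower_upperSemicontinuousWithinAt.2
      ⟨lowerSemicontinuousWithinAt_infConvFam hΩb htpos hv hvb hdiv x,
        (upperSemicontinuousAt_infConvFam hΩo hΩb htpos hv hvb hdiv hx).upperSemicontinuousWithinAt
          _⟩
  · exact infConvExactAt_of_mem_minkComboFam hΩb htpos hv hvb hdiv hx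
  · exact tendsto_infConvFam_atTop hΩo hΩb htpos hv hvb hdiv hxs hdist

/-- Proposition 2.6: if the `v_i` are continuous, bounded from below and blow up at `∂Ω_i`, then
their weighted infimal convolution is continuous on `Ω_λ`, exact at every point of `Ω_λ`, and
blows up at `∂Ω_λ`. -/
theorem infimal_convolution_exact_and_divergent
    (n k : ℕ) (Ω : Fin (k+1) → Set (EuclideanSpace ℝ (Fin n)))
    (hΩ : ∀ i, IsOpen (Ω i) ∧ Bornology.IsBounded (Ω i))
    (t : Fin (k+1) → ℝ) (ht : ∀ i, t i ∈ Set.Ioc (0:ℝ) 1) (hsum : ∑ i, t i = 1)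
    (v : Fin (k+1) → EuclideanSpace ℝ (Fin n) → ℝ)
    (hv : ∀ i, ContinuousOn (v i) (Ω i))
    (hvb : ∀ i, ∃ m : ℝ, ∀ x ∈ Ω i, m ≤ v i x)
    (hdiv : ∀ i, ∀ M : ℝ, ∃ δ > (0:ℝ), ∀ x ∈ Ω i,
      Metric.infDist x (frontier (Ω i)) < δ → M < v i x) :
    ContinuousOn (infConvFam n k t v Ω) (minkComboFam n k t Ω) ∧
    (∀ x ∈ minkComboFam n k t Ω, InfConvExactAt n k t v Ω x) ∧
    ∀ xs : ℕ → EuclideanSpace ℝ (Fin n), (∀ m, xs m ∈ minkComboFam n k t Ω) →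
      Tendsto (fun m => Metric.infDist (xs m) (frontier (minkComboFam n k t Ω))) atTop (nhds 0) →
      Tendsto (fun m => infConvFam n k t v Ω (xs m)) atTop atTop :=
  infimal_convolution_exact_and_divergent_general n k Ω hΩ t ht v hv hvb hdiv

end
end

section
/- Let Ω₀,…,Ω_k ⊂ ℝⁿ be open bounded sets, t₀,…,t_k ∈ (0,1] with Σ t_i = 1, and Ω_λ := t₀Ω₀+⋯+t_kΩ_k. If x = Σ_{i=0}^k t_i x_i with x_i ∈ Ω_i for every i, and dist(x, ∂Ω_λ) < δ, then dist(x_i, ∂Ω_i) < δ/t_i for every i = 0,…,k. -/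
open Metric Filter Topology Set

noncomputable section

/-!
Moving only the `i`-th summand of `x = Σ tⱼ xⱼ` inside the ball `B(xᵢ, r) ⊆ Ωᵢ` sweeps out the
ball `B(x, tᵢ r)`, so `B(x, tᵢ r) ⊆ Ω_λ`. Taking `r = dist(xᵢ, ∂Ωᵢ)` gives
`tᵢ dist(xᵢ, ∂Ωᵢ) ≤ dist(x, ∂Ω_λ)`, as soon as `∂Ω_λ ≠ ∅`; this holds because `Ω_λ` is bounded,
except in `ℝ⁰`, where all boundaries are empty and all distances to them vanish.
-/

theorem le_infDist_frontier_of_ball_subset {X : Type*} [PseudoMetricSpace X] {s : Set X} {x : X}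
    {r : ℝ} (hs : (frontier s).Nonempty) (hr : ball x r ⊆ s) : r ≤ infDist x (frontier s) :=
  (le_infDist hs).2 fun _ hy =>
    not_lt.1 fun h => hy.2 (interior_maximal hr isOpen_ball (mem_ball'.2 h))

section NormedSpace

variable {E : Type*} [NormedAddCommGroup E] [NormedSpace ℝ E]

theorem ball_infDist_frontier_subset [FiniteDimensional ℝ E] {s : Set E} {x : E} (hx : x ∈ s) :
    ball x (infDist x (frontier s)) ⊆ s := by
  rcases eq_or_ne s univ with rfl | hs
  · exact subset_univ _
  obtain ⟨y, hy, hxy⟩ := exists_mem_frontier_infDist_compl_eq_dist hx hs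
  calc ball x (infDist x (frontier s)) ⊆ ball x (infDist x sᶜ) :=
        ball_subset_ball (hxy ▸ infDist_le_dist_of_mem hy)
    _ ⊆ s := ball_infDist_compl_subset

theorem frontier_nonempty_of_isBounded [Nontrivial E] {s : Set E} (hb : Bornology.IsBounded s)
    (hne : s.Nonempty) : (frontier s).Nonempty :=
  nonempty_frontier_iff.2 ⟨hne, fun h => NormedSpace.unbounded_univ ℝ E (h ▸ hb)⟩

end NormedSpace

section MinkowskiCombination

variable {n k : ℕ} {t : Fin (k+1) → ℝ} {Ω : Fin (k+1) → Set (EuclideanSpace ℝ (Fin n))}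

theorem isBounded_minkComboFam (hΩ : ∀ i, Bornology.IsBounded (Ω i)) :
    Bornology.IsBounded (minkComboFam n k t Ω) := by
  let L : (Fin (k+1) → EuclideanSpace ℝ (Fin n)) →L[ℝ] EuclideanSpace ℝ (Fin n) :=
    ∑ i, t i • ContinuousLinearMap.proj i
  refine (L.lipschitz.isBounded_image (Bornology.isBounded_pi.2 (Or.inr hΩ))).subset ?_
  rintro _ ⟨p, hp, rfl⟩
  exact ⟨p, fun i _ => hp i, by simp [L]⟩

theorem ball_subset_minkComboFam {p : Fin (k+1) → EuclideanSpace ℝ (Fin n)}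
    (hp : ∀ j, p j ∈ Ω j) {i : Fin (k+1)} (hti : 0 < t i) {r : ℝ} (hr : ball (p i) r ⊆ Ω i) :
    ball (∑ j, t j • p j) (t i * r) ⊆ minkComboFam n k t Ω := by
  intro z hz
  set w := (t i)⁻¹ • (z - ∑ j, t j • p j)
  refine ⟨p + Pi.single i w, fun j => ?_, ?_⟩
  · rcases eq_or_ne j i with rfl | hj
    · refine hr (mem_ball_iff_norm.2 ?_)
      rw [mem_ball_iff_norm] at hz
      simpa [w, norm_smul, abs_of_pos hti, inv_mul_lt_iff₀ hti] using hz
    · simpa [hj] using hp j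
  · simp [smul_add, Finset.sum_add_distrib, Pi.single_apply, w, hti.ne']

end MinkowskiCombination

theorem dist_frontier_components_general
    (n k : ℕ) (Ω : Fin (k+1) → Set (EuclideanSpace ℝ (Fin n)))
    (hΩ : ∀ i, IsOpen (Ω i) ∧ Bornology.IsBounded (Ω i))
    (t : Fin (k+1) → ℝ) (ht : ∀ i, t i ∈ Set.Ioc (0:ℝ) 1)
    (x : EuclideanSpace ℝ (Fin n)) (p : Fin (k+1) → EuclideanSpace ℝ (Fin n))
    (hp : ∀ i, p i ∈ Ω i) (hpx : x = ∑ i, t i • p i)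
    (δ : ℝ) (hx : Metric.infDist x (frontier (minkComboFam n k t Ω)) < δ) :
    ∀ i, Metric.infDist (p i) (frontier (Ω i)) < δ / t i := by
  intro i
  have hti : 0 < t i := (ht i).1
  rw [lt_div_iff₀ hti, mul_comm]
  rcases subsingleton_or_nontrivial (EuclideanSpace ℝ (Fin n)) with hE | hE
  · simpa using hx
  have hball : ball x (t i * infDist (p i) (frontier (Ω i))) ⊆ minkComboFam n k t Ω :=
    hpx ▸ ball_subset_minkComboFam hp hti (ball_infDist_frontier_subset (hp i))
  have hfrontier : (frontier (minkComboFam n k t Ω)).Nonempty :=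
    frontier_nonempty_of_isBounded (isBounded_minkComboFam fun j => (hΩ j).2) ⟨x, p, hp, hpx⟩
  exact (le_infDist_frontier_of_ball_subset hfrontier hball).trans_lt hx

/-- The claim in the proof of Proposition 2.6: if `x = Σ t_i x_i` with `x_i ∈ Ω_i` and
`dist(x, ∂Ω_λ) < δ`, then `dist(x_i, ∂Ω_i) < δ / t_i` for every `i`. -/
theorem dist_frontier_components
    (n k : ℕ) (Ω : Fin (k+1) → Set (EuclideanSpace ℝ (Fin n)))
    (hΩ : ∀ i, IsOpen (Ω i) ∧ Bornology.IsBounded (Ω i))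
    (t : Fin (k+1) → ℝ) (ht : ∀ i, t i ∈ Set.Ioc (0:ℝ) 1) (hsum : ∑ i, t i = 1)
    (x : EuclideanSpace ℝ (Fin n)) (p : Fin (k+1) → EuclideanSpace ℝ (Fin n))
    (hp : ∀ i, p i ∈ Ω i) (hpx : x = ∑ i, t i • p i)
    (δ : ℝ) (hx : Metric.infDist x (frontier (minkComboFam n k t Ω)) < δ) :
    ∀ i, Metric.infDist (p i) (frontier (Ω i)) < δ / t i :=
  dist_frontier_components_general n k Ω hΩ t ht x p hp hpx δ hx

end
end

section
/- Let t₀,…,t_k ∈ (0,1] with Σ_{i=0}^k t_i = 1 and let A₀,…,A_k be positive definite real symmetric n×n matrices. Then for every h ∈ ℝⁿ, the infimum of Σ_{i=0}^k t_i ⟨A_i h_i, h_i⟩ over all h₀,…,h_k ∈ ℝⁿ with Σ_{i=0}^k t_i h_i = h equals ⟨(t₀A₀^{−1} + ⋯ + t_kA_k^{−1})^{−1} h, h⟩. Consequently, if a symmetric matrix B satisfies ⟨B h, h⟩ ≤ Σ_{i=0}^k t_i ⟨A_i h_i, h_i⟩ for all h₀,…,h_k ∈ ℝⁿ and h = Σ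 t_i h_i, then B ≤ (t₀A₀^{−1} + ⋯ + t_kA_k^{−1})^{−1} in the ordering of symmetric matrices. -/
open Metric Filter Topology Set

noncomputable section

/-! For every `z`, positivity of `Aᵢ` at `vᵢ - Aᵢ⁻¹ z` gives the Fenchel–Young bound
`⟨Aᵢ vᵢ, vᵢ⟩ ≥ 2 ⟨z, vᵢ⟩ - ⟨Aᵢ⁻¹ z, z⟩`. Averaging with the weights `tᵢ` over a decomposition
`h = ∑ tᵢ vᵢ` yields `∑ tᵢ ⟨Aᵢ vᵢ, vᵢ⟩ ≥ 2 ⟨z, h⟩ - ⟨S z, z⟩` with `S = ∑ tᵢ Aᵢ⁻¹`. For `z = S⁻¹ h`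
the right side is `⟨S⁻¹ h, h⟩`, and it is attained at `vᵢ = Aᵢ⁻¹ z`, where every bound is an
equality. Testing the domination hypothesis on these minimizers gives `B ≤ S⁻¹`. -/

namespace Matrix

variable {m ι : Type*} [Fintype m] [Fintype ι]

lemma IsHermitian.mulVec_dotProduct_comm {A : Matrix m m ℝ} (hA : A.IsHermitian) (v w : m → ℝ) :
    A *ᵥ v ⬝ᵥ w = A *ᵥ w ⬝ᵥ v := by
  rw [dotProduct_comm, dotProduct_mulVec, ← mulVec_transpose,
    (isHermitian_iff_isSymm.mp hA).eq]

lemma sum_smul_mulVec (t : ι → ℝ) (A : ι → Matrix m m ℝ) (z : m → ℝ) :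
    (∑ i, t i • A i) *ᵥ z = ∑ i, t i • (A i *ᵥ z) := by
  simp only [sum_mulVec, smul_mulVec]

lemma posSemidef_sub_of_forall_dotProduct_le {B H : Matrix m m ℝ} (hB : B.IsHermitian)
    (hH : H.IsHermitian) (hle : ∀ x, B *ᵥ x ⬝ᵥ x ≤ H *ᵥ x ⬝ᵥ x) : (H - B).PosSemidef := by
  refine .of_dotProduct_mulVec_nonneg (hH.sub hB) fun x => ?_
  rw [star_trivial, sub_mulVec, dotProduct_sub, dotProduct_comm x, dotProduct_comm x]
  exact sub_nonneg.mpr (hle x)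

variable [DecidableEq m]

lemma PosDef.mulVec_inv_mulVec {A : Matrix m m ℝ} (hA : A.PosDef) (z : m → ℝ) :
    A *ᵥ (A⁻¹ *ᵥ z) = z := by
  rw [mulVec_mulVec, mul_nonsing_inv _ ((isUnit_iff_isUnit_det A).mp hA.isUnit), one_mulVec]

lemma PosDef.two_mul_dotProduct_sub_le {A : Matrix m m ℝ} (hA : A.PosDef) (z v : m → ℝ) :
    2 * (z ⬝ᵥ v) - z ⬝ᵥ (A⁻¹ *ᵥ z) ≤ A *ᵥ v ⬝ᵥ v := by
  set w := A⁻¹ *ᵥ z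
  have hAw : A *ᵥ w = z := hA.mulVec_inv_mulVec z
  have hsq := hA.posSemidef.dotProduct_mulVec_nonneg (v - w)
  rw [star_trivial, dotProduct_comm, mulVec_sub, sub_dotProduct, dotProduct_sub, dotProduct_sub,
    hA.isHermitian.mulVec_dotProduct_comm v w, hAw] at hsq
  linarith

lemma posDef_sum_smul_inv [Nonempty ι] {t : ι → ℝ} (ht : ∀ i, 0 < t i)
    {A : ι → Matrix m m ℝ} (hA : ∀ i, (A i).PosDef) : (∑ i, t i • (A i)⁻¹).PosDef :=
  posDef_sum Finset.univ_nonempty fun i _ => (hA i).inv.smul (ht i)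

lemma two_mul_dotProduct_sub_le_sum {t : ι → ℝ} (ht : ∀ i, 0 ≤ t i)
    {A : ι → Matrix m m ℝ} (hA : ∀ i, (A i).PosDef) (z : m → ℝ) (v : ι → m → ℝ) :
    2 * (z ⬝ᵥ ∑ i, t i • v i) - z ⬝ᵥ ((∑ i, t i • (A i)⁻¹) *ᵥ z) ≤
      ∑ i, t i * (A i *ᵥ v i ⬝ᵥ v i) := by
  calc 2 * (z ⬝ᵥ ∑ i, t i • v i) - z ⬝ᵥ ((∑ i, t i • (A i)⁻¹) *ᵥ z)
      = ∑ i, t i * (2 * (z ⬝ᵥ v i) - z ⬝ᵥ ((A i)⁻¹ *ᵥ z)) := by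
        simp only [sum_smul_mulVec, dotProduct_sum, dotProduct_smul, smul_eq_mul, Finset.mul_sum,
          ← Finset.sum_sub_distrib]
        exact Finset.sum_congr rfl fun i _ => by ring
    _ ≤ ∑ i, t i * (A i *ᵥ v i ⬝ᵥ v i) :=
        Finset.sum_le_sum fun i _ =>
          mul_le_mul_of_nonneg_left ((hA i).two_mul_dotProduct_sub_le z (v i)) (ht i)

lemma sum_mul_mulVec_inv_dotProduct {t : ι → ℝ}
    {A : ι → Matrix m m ℝ} (hA : ∀ i, (A i).PosDef) (z : m → ℝ) :
    ∑ i, t i * (A i *ᵥ ((A i)⁻¹ *ᵥ z) ⬝ᵥ (A i)⁻¹ *ᵥ z) = z ⬝ᵥ ((∑ i, t i • (A i)⁻¹) *ᵥ z) := by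
  simp only [(hA _).mulVec_inv_mulVec, sum_smul_mulVec, dotProduct_sum, dotProduct_smul,
    smul_eq_mul]

def weightedHarmonicMean (t : ι → ℝ) (A : ι → Matrix m m ℝ) : Matrix m m ℝ :=
  (∑ i, t i • (A i)⁻¹)⁻¹

theorem isLeast_weightedHarmonicMean [Nonempty ι] {t : ι → ℝ} (ht : ∀ i, 0 < t i)
    {A : ι → Matrix m m ℝ} (hA : ∀ i, (A i).PosDef) (h : m → ℝ) :
    IsLeast {s | ∃ v : ι → m → ℝ, ∑ i, t i • v i = h ∧ s = ∑ i, t i * (A i *ᵥ v i ⬝ᵥ v i)}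
      (weightedHarmonicMean t A *ᵥ h ⬝ᵥ h) := by
  set S := ∑ i, t i • (A i)⁻¹ with hS
  set z := S⁻¹ *ᵥ h
  have hSz : S *ᵥ z = h := (posDef_sum_smul_inv ht hA).mulVec_inv_mulVec h
  have hval : weightedHarmonicMean t A *ᵥ h ⬝ᵥ h = z ⬝ᵥ (S *ᵥ z) := by
    rw [hSz]; rfl
  refine ⟨⟨fun i => (A i)⁻¹ *ᵥ z, ?_, ?_⟩, ?_⟩
  · rw [← hSz, sum_smul_mulVec]
  · rw [hval, sum_mul_mulVec_inv_dotProduct hA]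
  · rintro s ⟨v, hv, rfl⟩
    have key := two_mul_dotProduct_sub_le_sum (fun i => (ht i).le) hA z v
    rw [hv, ← hSz, ← hS] at key
    linarith

end Matrix

open Matrix in
theorem harmonic_mean_of_quadratic_forms_general
    (n k : ℕ) (t : Fin (k+1) → ℝ) (ht : ∀ i, t i ∈ Set.Ioc (0:ℝ) 1)
    (A : Fin (k+1) → Matrix (Fin n) (Fin n) ℝ) (hA : ∀ i, (A i).PosDef) :
    (∀ h : Fin n → ℝ,
      sInf {s : ℝ | ∃ hv : Fin (k+1) → Fin n → ℝ, (∑ i, t i • hv i) = h ∧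
          s = ∑ i, t i * ((A i).mulVec (hv i) ⬝ᵥ hv i)} =
        (∑ i, t i • (A i)⁻¹)⁻¹.mulVec h ⬝ᵥ h) ∧
    (∀ B : Matrix (Fin n) (Fin n) ℝ, B.IsSymm →
      (∀ hv : Fin (k+1) → Fin n → ℝ,
        B.mulVec (∑ i, t i • hv i) ⬝ᵥ (∑ i, t i • hv i) ≤
          ∑ i, t i * ((A i).mulVec (hv i) ⬝ᵥ hv i)) →
      MatLE n B (∑ i, t i • (A i)⁻¹)⁻¹) := by
  have hleast h := isLeast_weightedHarmonicMean (fun i => (ht i).1) hA h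
  refine ⟨fun h => (hleast h).csInf_eq, fun B hB hdom => ?_⟩
  refine posSemidef_sub_of_forall_dotProduct_le (isHermitian_iff_isSymm.mpr hB)
    (posDef_sum_smul_inv (fun i => (ht i).1) hA).inv.isHermitian fun x => ?_
  obtain ⟨v, hv, hval⟩ := (hleast x).1
  have := hdom v
  rw [hv, ← hval] at this
  exact this

open Matrix in
/-- The minimization step at the end of the proof of Proposition 2.5: the infimum of
`Σ t_i ⟨A_i h_i, h_i⟩` over decompositions `h = Σ t_i h_i` equals the quadratic form of the
harmonic mean `(Σ t_i A_i⁻¹)⁻¹` at `h`; consequently any symmetric `B` whose quadratic form is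
dominated by `Σ t_i ⟨A_i h_i, h_i⟩` for all such decompositions satisfies
`B ≤ (Σ t_i A_i⁻¹)⁻¹`. -/
theorem harmonic_mean_of_quadratic_forms
    (n k : ℕ) (t : Fin (k+1) → ℝ) (ht : ∀ i, t i ∈ Set.Ioc (0:ℝ) 1) (hsum : ∑ i, t i = 1)
    (A : Fin (k+1) → Matrix (Fin n) (Fin n) ℝ) (hA : ∀ i, (A i).PosDef) :
    (∀ h : Fin n → ℝ,
      sInf {s : ℝ | ∃ hv : Fin (k+1) → Fin n → ℝ, (∑ i, t i • hv i) = h ∧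
          s = ∑ i, t i * ((A i).mulVec (hv i) ⬝ᵥ hv i)} =
        (∑ i, t i • (A i)⁻¹)⁻¹.mulVec h ⬝ᵥ h) ∧
    (∀ B : Matrix (Fin n) (Fin n) ℝ, B.IsSymm →
      (∀ hv : Fin (k+1) → Fin n → ℝ,
        B.mulVec (∑ i, t i • hv i) ⬝ᵥ (∑ i, t i • hv i) ≤
          ∑ i, t i * ((A i).mulVec (hv i) ⬝ᵥ hv i)) →
      MatLE n B (∑ i, t i • (A i)⁻¹)⁻¹) :=
  harmonic_mean_of_quadratic_forms_general n k t ht A hA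

end
end
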